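/- For integers k ≥ 2 and c ≥ 1, the double series Σ_{0<n_1<n_2} (1/(n_1(n_2+c)^k)) converges and equals a ℚ-linear combination of multiple zeta values of weight at most k+1 and depth at most 2. -/

import Mathlib

/-!
Writing `n₁ = n + 1` and `n₂ = n₁ + b + 1`, the series becomes `∑_b shiftedSum (b + 1 + c) k`, where
`shiftedSum j m = ∑_{n ≥ 1} 1 / (n (n + j)^m)`. At `c = 0` this is `ζ(1, k)`, and shifting `b`
gives the value `ζ(1, k) - ∑_{j=1}^{c} shiftedSum j k`. Partial fractions give
`shiftedSum j 1 = H_j / j` (a telescoping series) and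
`shiftedSum j (m + 1) = (shiftedSum j m - ζ(m + 1) + H_j^{(m+1)}) / j`, so each
`shiftedSum j k` is a rational combination of `1, ζ(2), …, ζ(k)`.
Convergence follows from `(x y)^{3/2} ≤ x (x + y)^2`.
-/

/-- The set of multiple zeta values of weight at most `w` and depth at most `d`
(including 1 as the empty multiple zeta value). -/
def mzvSet (w d : ℕ) : Set ℝ :=
  {x | ∃ (r : ℕ) (k : Fin r → ℕ), (∀ i, 1 ≤ k i) ∧
    (∀ i : Fin r, (i : ℕ) = r - 1 → 2 ≤ k i) ∧ (∑ i, k i) ≤ w ∧ r ≤ d ∧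
    x = ∑' n : {n : Fin r → ℕ+ // StrictMono n}, ∏ i, ((n.1 i : ℝ))⁻¹ ^ (k i)}

open Finset Filter Topology

theorem hasSum_sub_succ_of_antitone {g : ℕ → ℝ} (hg : Antitone g)
    (h0 : Tendsto g atTop (𝓝 0)) : HasSum (fun n => g n - g (n + 1)) (g 0) := by
  rw [hasSum_iff_tendsto_nat_of_nonneg fun n => sub_nonneg.2 (hg n.le_succ)]
  simp only [Finset.sum_range_sub']
  simpa using tendsto_const_nhds.sub h0

theorem hasSum_sub_nat_add_of_antitone {g : ℕ → ℝ} (hg : Antitone g)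
    (h0 : Tendsto g atTop (𝓝 0)) (j : ℕ) :
    HasSum (fun n => g n - g (n + j)) (∑ i ∈ range j, g i) := by
  induction j with
  | zero => simp [hasSum_zero]
  | succ j ih =>
    have hstep := hasSum_sub_succ_of_antitone (g := fun n => g (n + j))
      (fun a b h => hg (by omega)) (h0.comp (tendsto_add_atTop_nat j))
    rw [sum_range_succ]
    convert ih.add hstep using 1
    · funext n
      rw [show n + 1 + j = n + (j + 1) by omega]
      ring
    · simp

theorem summable_inv_add_one_pow {m : ℕ} (hm : 2 ≤ m) :
    Summable fun n : ℕ => (((n : ℝ) + 1) ^ m)⁻¹ := by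
  simpa using (summable_nat_add_iff 1).2 (Real.summable_nat_pow_inv.2 hm)

theorem tsum_inv_add_one_add_pow_eq {m : ℕ} (hm : 2 ≤ m) (j : ℕ) :
    ∑' n : ℕ, (((n : ℝ) + 1 + j) ^ m)⁻¹
      = ∑' n : ℕ, (((n : ℝ) + 1) ^ m)⁻¹ - ∑ i ∈ range j, (((i : ℝ) + 1) ^ m)⁻¹ := by
  rw [← (summable_inv_add_one_pow hm).sum_add_tsum_nat_add j, add_sub_cancel_left]
  exact tsum_congr fun n => by push_cast; ring

noncomputable def shiftedTerm (j m n : ℕ) : ℝ := (((n : ℝ) + 1) * ((n : ℝ) + 1 + j) ^ m)⁻¹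

noncomputable def shiftedSum (j m : ℕ) : ℝ := ∑' n, shiftedTerm j m n

theorem summable_shiftedTerm (j : ℕ) {m : ℕ} (hm : 1 ≤ m) : Summable (shiftedTerm j m) := by
  refine (summable_inv_add_one_pow le_rfl).of_nonneg_of_le
    (fun n => by unfold shiftedTerm; positivity) fun n => ?_
  have h1 : (1 : ℝ) ≤ (n : ℝ) + 1 + j := by
    linarith [n.cast_nonneg (α := ℝ), j.cast_nonneg (α := ℝ)]
  unfold shiftedTerm
  rw [sq]
  gcongr
  exact (le_add_of_nonneg_right j.cast_nonneg).trans (le_self_pow₀ h1 (by omega))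

theorem shiftedSum_one {j : ℕ} (hj : j ≠ 0) :
    shiftedSum j 1 = (((j : ℚ)⁻¹ * ∑ i ∈ range j, 1 / ((i : ℚ) + 1) : ℚ) : ℝ) := by
  have hg : Antitone fun n : ℕ => 1 / ((n : ℝ) + 1) := fun a b hab => by
    dsimp only
    gcongr
  refine (((hasSum_sub_nat_add_of_antitone hg tendsto_one_div_add_atTop_nhds_zero_nat j).mul_left
    (j : ℝ)⁻¹).congr_fun fun n => ?_).tsum_eq.trans (by simp)
  unfold shiftedTerm
  push_cast
  field_simp
  ring

theorem shiftedSum_succ {j : ℕ} (hj : j ≠ 0) {m : ℕ} (hm : 1 ≤ m) :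
    shiftedSum j (m + 1) = (j : ℝ)⁻¹ * (shiftedSum j m
      - (∑' n : ℕ, (((n : ℝ) + 1) ^ (m + 1))⁻¹ - ∑ i ∈ range j, (((i : ℝ) + 1) ^ (m + 1))⁻¹)) := by
  have partial_fractions : ∀ n, shiftedTerm j (m + 1) n
      = (j : ℝ)⁻¹ * (shiftedTerm j m n - (((n : ℝ) + 1 + j) ^ (m + 1))⁻¹) := fun n => by
    unfold shiftedTerm
    field_simp
    ring
  rw [shiftedSum, tsum_congr partial_fractions, tsum_mul_left,
    (summable_shiftedTerm j hm).tsum_sub, tsum_inv_add_one_add_pow_eq (by omega), shiftedSum]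
  refine ((summable_nat_add_iff j).2 (summable_inv_add_one_pow (m := m + 1) (by omega))).congr
    fun n => ?_
  push_cast
  ring

theorem one_mem_mzvSet (w d : ℕ) : (1 : ℝ) ∈ mzvSet w d := by
  refine ⟨0, Fin.elim0, fun i => i.elim0, fun i => i.elim0, by simp, Nat.zero_le d, ?_⟩
  have : Unique {n : Fin 0 → ℕ+ // StrictMono n} :=
    ⟨⟨⟨Fin.elim0, Subsingleton.strictMono _⟩⟩, fun n => Subtype.ext (funext fun i => i.elim0)⟩
  simp

theorem zeta_mem_mzvSet {m w d : ℕ} (hm : 2 ≤ m) (hw : m ≤ w) (hd : 1 ≤ d) :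
    ∑' n : ℕ, (((n : ℝ) + 1) ^ m)⁻¹ ∈ mzvSet w d := by
  refine ⟨1, fun _ => m, fun _ => one_le_two.trans hm, fun _ _ => hm, by simpa using hw, hd, ?_⟩
  let e : {n : Fin 1 → ℕ+ // StrictMono n} ≃ ℕ+ :=
    (Equiv.subtypeUnivEquiv Subsingleton.strictMono).trans (Equiv.funUnique (Fin 1) ℕ+)
  rw [← e.symm.tsum_eq]
  simp [e, tsum_pnat_eq_tsum_succ (f := fun n => ((n : ℝ) ^ m)⁻¹)]

def gapEquiv : ℕ × ℕ ≃ {p : ℕ+ × ℕ+ // p.1 < p.2} where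
  toFun q := ⟨(q.2.succPNat, (q.2 + q.1 + 1).succPNat), by
    simp only [← PNat.coe_lt_coe, Nat.succPNat_coe]; omega⟩
  invFun p := ((p.1.2 : ℕ) - p.1.1 - 1, (p.1.1 : ℕ) - 1)
  left_inv q := by ext <;> simp; omega
  right_inv p := by
    have := PNat.coe_lt_coe _ _ |>.2 p.2
    have := p.1.1.pos
    ext <;> simp only [← PNat.coe_inj, Nat.succPNat_coe] <;> omega

theorem gapEquiv_fst_coe (q : ℕ × ℕ) : ((gapEquiv q).1.1 : ℕ) = q.2 + 1 := rfl

theorem gapEquiv_snd_coe (q : ℕ × ℕ) : ((gapEquiv q).1.2 : ℕ) = q.2 + q.1 + 2 := rfl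

theorem gapEquiv_term (c k : ℕ) (q : ℕ × ℕ) :
    1 / (((gapEquiv q).1.1 : ℝ) * (((gapEquiv q).1.2 : ℝ) + c) ^ k)
      = shiftedTerm (q.1 + 1 + c) k q.2 := by
  simp only [shiftedTerm, one_div, gapEquiv_fst_coe, gapEquiv_snd_coe]
  push_cast
  ring_nf

def strictMonoFinTwoEquiv (α : Type*) [Preorder α] :
    {n : Fin 2 → α // StrictMono n} ≃ {p : α × α // p.1 < p.2} :=
  (piFinTwoEquiv fun _ => α).subtypeEquiv fun n => by simp [Fin.strictMono_iff_lt_succ]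

theorem zetaOne_mem_mzvSet {m w : ℕ} (hm : 2 ≤ m) (hw : m + 1 ≤ w) :
    ∑' q : ℕ × ℕ, shiftedTerm (q.1 + 1) m q.2 ∈ mzvSet w 2 := by
  refine ⟨2, ![1, m], fun i => ?_, fun i hi => ?_, ?_, le_rfl, ?_⟩
  · fin_cases i <;> simp; omega
  · obtain rfl : i = 1 := Fin.ext hi
    simpa using hm
  · simpa [add_comm] using hw
  · rw [← (gapEquiv.trans (strictMonoFinTwoEquiv ℕ+).symm).tsum_eq]
    refine tsum_congr fun q => ?_
    simpa [strictMonoFinTwoEquiv, mul_inv, inv_pow] using (gapEquiv_term 0 m q).symm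

theorem mul_rpow_three_halves_le {x y : ℝ} (hx : 0 ≤ x) (hy : 0 ≤ y) :
    (x * y) ^ (3 / 2 : ℝ) ≤ x * (x + y) ^ 2 := by
  have hsqrt : √(x * y) ≤ x + y := Real.sqrt_le_iff.2 ⟨by positivity, by nlinarith⟩
  calc (x * y) ^ (3 / 2 : ℝ) = x * y * √(x * y) := by
        rw [show (3 / 2 : ℝ) = 1 + 1 / 2 by norm_num, Real.rpow_add' (by positivity) (by norm_num),
          Real.rpow_one, Real.sqrt_eq_rpow]
    _ ≤ x * y * (x + y) := by gcongr
    _ ≤ x * (x + y) ^ 2 := by nlinarith [mul_nonneg (mul_nonneg hx (add_nonneg hx hy)) hx]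

theorem summable_shiftedTerm_prod {k : ℕ} (hk : 2 ≤ k) (c : ℕ) :
    Summable fun q : ℕ × ℕ => shiftedTerm (q.1 + 1 + c) k q.2 := by
  have h32 : Summable fun n : ℕ => (((n : ℝ) + 1) ^ (3 / 2 : ℝ))⁻¹ := by
    simpa using (summable_nat_add_iff 1).2
      (Real.summable_nat_rpow_inv.2 (by norm_num : (1 : ℝ) < 3 / 2))
  refine (h32.mul_of_nonneg h32 (fun _ => by positivity) fun _ => by positivity).of_nonneg_of_le
    (fun q => by unfold shiftedTerm; positivity) fun ⟨b, a⟩ => ?_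
  set x : ℝ := (a : ℝ) + 1
  set y : ℝ := (b : ℝ) + 1
  have hx : 1 ≤ x := by simp [x]
  have hy : 1 ≤ y := by simp [y]
  have hxy : (a : ℝ) + 1 + ((b + 1 + c : ℕ) : ℝ) = x + y + c := by push_cast; ring
  simp only [shiftedTerm, hxy, ← mul_inv]
  refine inv_anti₀ (by positivity) ?_
  calc y ^ (3 / 2 : ℝ) * x ^ (3 / 2 : ℝ) = (x * y) ^ (3 / 2 : ℝ) := by
        rw [Real.mul_rpow (by positivity) (by positivity), mul_comm]
    _ ≤ x * (x + y) ^ 2 := mul_rpow_three_halves_le (by positivity) (by positivity)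
    _ ≤ x * (x + y + c) ^ k := by
        gcongr
        exact (pow_le_pow_left₀ (by positivity) (le_add_of_nonneg_right c.cast_nonneg) 2).trans
          (pow_le_pow_right₀ (by linarith [c.cast_nonneg (α := ℝ)]) hk)

theorem tsum_shiftedTerm_prod_eq {k : ℕ} (hk : 2 ≤ k) (c : ℕ) :
    ∑' q : ℕ × ℕ, shiftedTerm (q.1 + 1 + c) k q.2
      = ∑' q : ℕ × ℕ, shiftedTerm (q.1 + 1) k q.2 - ∑ i ∈ range c, shiftedSum (i + 1) k := by
  have hs := summable_shiftedTerm_prod hk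
  have iterated : ∀ c, ∑' q : ℕ × ℕ, shiftedTerm (q.1 + 1 + c) k q.2
      = ∑' b, shiftedSum (b + 1 + c) k := fun c =>
    (hs c).tsum_prod' (hs c).prod_factor
  have hA : Summable fun b => shiftedSum (b + 1) k := (hs 0).prod
  have iterated_zero := iterated 0
  simp only [Nat.add_zero] at iterated_zero
  rw [iterated, iterated_zero, ← hA.sum_add_tsum_nat_add c]
  simp only [add_right_comm _ 1 c, add_sub_cancel_left]

theorem ratCast_mem_span_mzvSet (w d : ℕ) (q : ℚ) :
    (q : ℝ) ∈ Submodule.span ℚ (mzvSet w d) := by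
  simpa [Rat.smul_def] using
    (Submodule.span ℚ (mzvSet w d)).smul_mem q (Submodule.subset_span (one_mem_mzvSet w d))

theorem inv_natCast_mul_mem {p : Submodule ℚ ℝ} (j : ℕ) {x : ℝ} (hx : x ∈ p) :
    (j : ℝ)⁻¹ * x ∈ p := by
  simpa [Rat.smul_def] using p.smul_mem (j : ℚ)⁻¹ hx

theorem shiftedSum_mem_span {j : ℕ} (hj : j ≠ 0) {m w d : ℕ} (hm : 1 ≤ m) (hw : m ≤ w)
    (hd : 1 ≤ d) : shiftedSum j m ∈ Submodule.span ℚ (mzvSet w d) := by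
  induction m, hm using Nat.le_induction with
  | base =>
    rw [shiftedSum_one hj]
    exact ratCast_mem_span_mzvSet w d _
  | succ m hm ih =>
    rw [shiftedSum_succ hj hm]
    have hq := ratCast_mem_span_mzvSet w d (∑ i ∈ range j, (((i : ℚ) + 1) ^ (m + 1))⁻¹)
    push_cast at hq
    exact inv_natCast_mul_mem j <| Submodule.sub_mem _ (ih (by omega)) <|
      Submodule.sub_mem _ (Submodule.subset_span (zeta_mem_mzvSet (by omega) hw hd)) hq

theorem stmt_19_general (k : ℕ) (hk : 2 ≤ k) (c : ℕ) :
    Summable (fun p : {p : ℕ+ × ℕ+ // p.1 < p.2} =>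
        (1 : ℝ) / ((p.1.1 : ℝ) * ((p.1.2 : ℝ) + (c : ℝ)) ^ k)) ∧
    (∑' p : {p : ℕ+ × ℕ+ // p.1 < p.2},
        (1 : ℝ) / ((p.1.1 : ℝ) * ((p.1.2 : ℝ) + (c : ℝ)) ^ k))
      ∈ Submodule.span ℚ (mzvSet (k + 1) 2) := by
  refine ⟨gapEquiv.summable_iff.1 <| (summable_shiftedTerm_prod hk c).congr fun q =>
    (gapEquiv_term c k q).symm, ?_⟩
  rw [← gapEquiv.tsum_eq, tsum_congr (gapEquiv_term c k), tsum_shiftedTerm_prod_eq hk c]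
  exact Submodule.sub_mem _ (Submodule.subset_span (zetaOne_mem_mzvSet hk le_rfl)) <|
    Submodule.sum_mem _ fun i _ =>
      shiftedSum_mem_span (Nat.succ_ne_zero i) (by omega) (Nat.le_succ k) one_le_two

/-- Σ_{0<n₁<n₂} 1/(n₁(n₂+c)^k) converges and is a ℚ-linear combination of
multiple zeta values of weight ≤ k+1 and depth ≤ 2. -/
theorem stmt_19 (k : ℕ) (hk : 2 ≤ k) (c : ℕ) (hc : 1 ≤ c) :
    Summable (fun p : {p : ℕ+ × ℕ+ // p.1 < p.2} =>
        (1 : ℝ) / ((p.1.1 : ℝ) * ((p.1.2 : ℝ) + (c : ℝ)) ^ k)) ∧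
    (∑' p : {p : ℕ+ × ℕ+ // p.1 < p.2},
        (1 : ℝ) / ((p.1.1 : ℝ) * ((p.1.2 : ℝ) + (c : ℝ)) ^ k))
      ∈ Submodule.span ℚ (mzvSet (k + 1) 2) :=
  stmt_19_general k hk c
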